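/- arXiv:1007.1601 — 10 statements merged into one kernel-verified Lean document; each statement's English description precedes it below -/
import Mathlib

section
/- Every MV-algebra satisfies the identity (M2): for all x, y, z, u, ¬(¬(x ⊕ y) ⊕ ¬(z ⊕ u)) ⊕ ¬(z ⊕ (u ⊕ ¬(x ⊕ (y ⊕ (z ⊕ u))))) = x ⊕ y. -/
theorem stmt1 (A : Type*) (add : A → A → A) (neg : A → A) (zero : A)
  (A1 : ∀ x y z : A, add (add x y) z = add x (add y z))
  (A2 : ∀ x y : A, add x y = add y x)
  (A3 : ∀ x : A, add x zero = x)
  (A4 : ∀ x : A, neg (neg x) = x)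
  (A5 : ∀ x : A, add x (neg zero) = neg zero)
  (A6 : ∀ x y : A, add (neg (add (neg x) y)) y = add (neg (add (neg y) x)) x) :
  ∀ x y z u : A, add (neg (add (neg (add x y)) (neg (add z u)))) (neg (add z (add u (neg (add x (add y (add z u))))))) = add x y := by
  -- L1 : ¬a ⊕ a = ¬0  (the "1" of the algebra)
  have L1 : ∀ a : A, add (neg a) a = neg zero := by
    intro a
    have h := A6 a (neg zero)
    rw [A5, A4, A2 zero a, A3] at h
    exact h.symm
  intro x y z u
  set a := add x y with ha
  set b := add z u with hb
  -- rewrite the second summand: z ⊕ (u ⊕ ¬(x ⊕ (y ⊕ (z⊕u)))) = b ⊕ ¬(a ⊕ b)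
  have hre : add z (add u (neg (add x (add y b)))) = add b (neg (add a b)) := by
    rw [← A1 z u, ← A1 x y]
  rw [hre]
  -- key identity (ii): b ⊕ ¬(a⊕b) = ¬a ⊕ ¬(¬a⊕¬b)
  have hii : add b (neg (add a b)) = add (neg a) (neg (add (neg a) (neg b))) := by
    calc add b (neg (add a b)) = add (neg (add a b)) b := A2 _ _
      _ = add (neg (add (neg (neg a)) b)) b := by rw [A4]
      _ = add (neg (add (neg b) (neg a))) (neg a) := A6 _ _
      _ = add (neg (add (neg a) (neg b))) (neg a) := by rw [A2 (neg b) (neg a)]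
      _ = add (neg a) (neg (add (neg a) (neg b))) := A2 _ _
  rw [hii]
  -- now goal: ¬(¬a⊕¬b) ⊕ ¬(¬a ⊕ ¬(¬a⊕¬b)) = a ; use A6 and (a⊙b)⊙¬a = 0
  set c := neg (add (neg a) (neg b)) with hc
  have hnc : neg c = add (neg a) (neg b) := by rw [hc, A4]
  have hone : add (neg c) a = neg zero := by
    calc add (neg c) a = add (add (neg a) (neg b)) a := by rw [hnc]
      _ = add a (add (neg a) (neg b)) := A2 _ _
      _ = add (add a (neg a)) (neg b) := (A1 _ _ _).symm
      _ = add (neg zero) (neg b) := by rw [A2 a (neg a), L1]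
      _ = neg zero := by rw [A2, A5]
  calc add c (neg (add (neg a) c)) = add (neg (add (neg a) c)) c := A2 _ _
    _ = add (neg (add (neg c) a)) a := A6 _ _
    _ = add (neg (neg zero)) a := by rw [hone]
    _ = add zero a := by rw [A4]
    _ = a := by rw [A2, A3]
end

section
/- Let (A, ⊕, ¬) be an algebra satisfying (M1) and (M2). Then for all y, z, u in A: ¬(¬y ⊕ ¬(z ⊕ u)) ⊕ ¬(z ⊕ (u ⊕ ¬(y ⊕ (z ⊕ u)))) = y. -/
theorem stmt3 (A : Type*) (add : A → A → A) (neg : A → A)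
  (M1 : ∀ x y z : A, add (neg (add x (add (neg x) y))) z = z)
  (M2 : ∀ x y z u : A, add (neg (add (neg (add x y)) (neg (add z u)))) (neg (add z (add u (neg (add x (add y (add z u))))))) = add x y) :
  ∀ y z u : A, add (neg (add (neg y) (neg (add z u)))) (neg (add z (add u (neg (add y (add z u)))))) = y := by
  intro y z u
  have h := M2 (neg (add y (add (neg y) y))) y z u
  simpa only [M1] using h
end

section
/- Let (A, ⊕, ¬) be an algebra satisfying (M1) and (M2). Then the expression ¬(u ⊕ ¬u) is constant: for all u, v in A, ¬(u ⊕ ¬u) = ¬(v ⊕ ¬v). Moreover, for all x, z, u in A, ¬(u ⊕ ¬u) = ¬(x ⊕ (¬x ⊕ z)). -/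
theorem stmt5 (A : Type*) (add : A → A → A) (neg : A → A)
  (M1 : ∀ x y z : A, add (neg (add x (add (neg x) y))) z = z)
  (M2 : ∀ x y z u : A, add (neg (add (neg (add x y)) (neg (add z u)))) (neg (add z (add u (neg (add x (add y (add z u))))))) = add x y) :
  (∀ u v : A, neg (add u (neg u)) = neg (add v (neg v))) ∧
  (∀ x z u : A, neg (add u (neg u)) = neg (add x (add (neg x) z))) := by
  have e20 : ∀ v0 v1 v2 : A, (add (neg (add (neg (add v0 v1)) (neg v2))) (neg (add v2 (neg (add v0 (add v1 v2)))))) = (add v0 v1) := fun v0 v1 v2 => (Eq.trans (Eq.symm (Eq.trans (Eq.trans (congrArg (fun w => (add (neg (add (neg (add v0 v1)) (neg w))) (neg (add (neg (add v0 (add (neg v0) v0))) (add v2 (neg (add v0 (add v1 (add (neg (add v0 (add (neg v0) v0))) v2))))))))) (M1 v0 v0 v2)) (congrArg (fun w => (add (neg (add (neg (add v0 v1)) (neg v2))) (neg w))) (M1 v0 v0 (add v2 (neg (add v0 (add v1 (add (neg (add v0 (add (neg v0) v0))) v2)))))))) (congrArg (fun w => (add (neg (add (neg (add v0 v1)) (neg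 v2))) (neg (add v2 (neg (add v0 (add v1 w))))))) (M1 v0 v0 v2)))) (M2 v0 v1 (neg (add v0 (add (neg v0) v0))) v2))
  have e21 : ∀ v0 v1 v2 : A, (add (neg (neg v0)) (neg (add v0 (neg (add v1 (add (add (neg v1) v2) v0)))))) = (add v1 (add (neg v1) v2)) := fun v0 v1 v2 => (Eq.trans (Eq.symm (congrArg (fun w => (add (neg w) (neg (add v0 (neg (add v1 (add (add (neg v1) v2) v0))))))) (M1 v1 v2 (neg v0)))) (e20 v1 (add (neg v1) v2) v0))
  have e26 : ∀ v0 v1 v2 v3 : A, (add (neg (neg v0)) (neg (add v0 (neg (add (add v1 (add (neg v1) v2)) (add v3 v0)))))) = (add (add v1 (add (neg v1) v2)) v3) := fun v0 v1 v2 v3 => (Eq.trans (Eq.symm (congrArg (fun w => (add (neg (neg v0)) (neg (add v0 (neg (add (add v1 (add (neg v1) v2)) (add w v0))))))) (M1 v1 v2 v3))) (Eq.trans (e21 v0 (add v1 (add (neg v1) v2)) v3) (congrArg (fun w => (add (add v1 (add (neg v1) v2)) w)) (M1 v1 v2 v3))))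
  have e4 : ∀ v0 v1 v2 : A, (add (neg (add (neg v2) (neg (add v0 v1)))) (neg (add v0 (add v1 (neg (add v2 (add v0 v1))))))) = v2 := fun v0 v1 v2 => (Eq.trans (Eq.symm (Eq.trans (congrArg (fun w => (add (neg (add (neg w) (neg (add v0 v1)))) (neg (add v0 (add v1 (neg (add (neg (add v0 (add (neg v0) v0))) (add v2 (add v0 v1))))))))) (M1 v0 v0 v2)) (congrArg (fun w => (add (neg (add (neg v2) (neg (add v0 v1)))) (neg (add v0 (add v1 (neg w)))))) (M1 v0 v0 (add v2 (add v0 v1)))))) (Eq.trans (M2 (neg (add v0 (add (neg v0) v0))) v2 v0 v1) (M1 v0 v0 v2)))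
  have e6 : ∀ v0 v1 : A, (add (neg (add (neg v0) (neg v1))) (neg (add v1 (neg (add v0 v1))))) = v0 := fun v0 v1 => (Eq.trans (Eq.symm (Eq.trans (Eq.trans (congrArg (fun w => (add (neg (add (neg v0) (neg w))) (neg (add (neg (add v0 (add (neg v0) v0))) (add v1 (neg (add v0 (add (neg (add v0 (add (neg v0) v0))) v1)))))))) (M1 v0 v0 v1)) (congrArg (fun w => (add (neg (add (neg v0) (neg v1))) (neg w))) (M1 v0 v0 (add v1 (neg (add v0 (add (neg (add v0 (add (neg v0) v0))) v1))))))) (congrArg (fun w => (add (neg (add (neg v0) (neg v1))) (neg (add v1 (neg (add v0 w)))))) (M1 v0 v0 v1)))) (e4 (neg (add v0 (add (neg v0) v0))) v1 v0))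
  have e7 : ∀ v0 v1 v2 : A, (add (neg (neg v0)) (neg (add v0 (neg (add (add v1 (add (neg v1) v2)) v0))))) = (add v1 (add (neg v1) v2)) := fun v0 v1 v2 => (Eq.trans (Eq.symm (congrArg (fun w => (add (neg w) (neg (add v0 (neg (add (add v1 (add (neg v1) v2)) v0)))))) (M1 v1 v2 (neg v0)))) (e6 (add v1 (add (neg v1) v2)) v0))
  have e27 : ∀ v0 v1 v2 v3 : A, (add (add v0 (add (neg v0) v1)) (neg (add v2 (add (neg v2) v3)))) = (add v0 (add (neg v0) v1)) := fun v0 v1 v2 v3 => (Eq.trans (Eq.symm (e26 v0 v0 v1 (neg (add v2 (add (neg v2) v3))))) (Eq.trans (congrArg (fun w => (add (neg (neg v0)) (neg (add v0 (neg (add (add v0 (add (neg v0) v1)) w)))))) (M1 v2 v3 v0)) (e7 v0 v0 v1)))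
  have e29 : ∀ v0 v1 v2 v3 v4 : A, (add (add v0 (add (neg v0) v1)) (neg (add (add v2 (add (neg v2) v3)) v4))) = (add v0 (add (neg v0) v1)) := fun v0 v1 v2 v3 v4 => (Eq.trans (Eq.symm (congrArg (fun w => (add (add v0 (add (neg v0) v1)) (neg (add (add v2 (add (neg v2) v3)) w)))) (M1 v2 v3 v4))) (e27 v0 v1 (add v2 (add (neg v2) v3)) v4))
  have e30 : ∀ v0 v1 v2 v3 : A, (add (neg (neg (add v0 (add (neg v0) v1)))) (neg (add v0 (add (neg v0) v1)))) = (add v2 (add (neg v2) v3)) := fun v0 v1 v2 v3 => (Eq.trans (Eq.symm (congrArg (fun w => (add (neg (neg (add v0 (add (neg v0) v1)))) (neg w))) (e29 v0 v1 v2 v3 (add v0 (add (neg v0) v1))))) (e7 (add v0 (add (neg v0) v1)) v2 v3))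
  have e34 : ∀ v2 v3 v0 v1 : A, (add (add (neg v0) (neg v1)) v0) = (add (neg (neg (add v2 (add (neg v2) v3)))) (neg (add v2 (add (neg v2) v3)))) := fun v2 v3 v0 v1 => (Eq.trans (Eq.symm (congrArg (fun w => (add (add (neg v0) (neg v1)) w)) (e6 v0 v1))) (Eq.symm (e30 v2 v3 (add (neg v0) (neg v1)) (neg (add v1 (neg (add v0 v1)))))))
  have e35 : ∀ v2 v3 v0 v1 : A, (add v0 (add (neg v0) v1)) = (add (add (neg v2) (neg v3)) v2) := fun v2 v3 v0 v1 => (Eq.trans (Eq.symm (e30 v2 v2 v0 v1)) (Eq.symm (e34 v2 v2 v2 v3)))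
  have e40 : ∀ v3 v4 v0 v1 v2 : A, (add (add v0 (add (neg v0) v1)) v2) = (add (add (neg v3) (neg v4)) v3) := fun v3 v4 v0 v1 v2 => (Eq.trans (Eq.symm (congrArg (fun w => (add (add v0 (add (neg v0) v1)) w)) (M1 v0 v1 v2))) (e35 v3 v4 (add v0 (add (neg v0) v1)) v2))
  have e41 : ∀ v2 v3 v4 v0 v1 : A, (add v0 (add (neg v0) v1)) = (add (add v2 (add (neg v2) v3)) v4) := fun v2 v3 v4 v0 v1 => (Eq.trans (Eq.symm (Eq.symm (e35 v2 v2 v0 v1))) (Eq.symm (e40 v2 v2 v2 v3 v4)))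
  have e42 : ∀ v2 v3 v0 v1 : A, (add v0 (add (neg v0) v1)) = (add v2 (add (neg v2) v3)) := fun v2 v3 v0 v1 => (Eq.trans (Eq.symm (e27 v0 v1 v2 v2)) (Eq.symm (e41 v0 v1 (neg (add v2 (add (neg v2) v2))) v2 v3)))
  have e31 : ∀ v0 v1 v2 v3 v4 : A, (add (add v0 (add (neg v0) v1)) (neg (add (neg v2) (add v3 (add (neg v3) v4))))) = (add v0 (add (neg v0) v1)) := fun v0 v1 v2 v3 v4 => (Eq.trans (Eq.symm (congrArg (fun w => (add (add v0 (add (neg v0) v1)) (neg (add (neg v2) w)))) (e7 v2 v3 v4))) (e27 v0 v1 (neg v2) (neg (add v2 (neg (add (add v3 (add (neg v3) v4)) v2))))))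
  have e32 : ∀ v0 v1 v2 : A, (add (neg (add (neg (neg v0)) (neg (add v1 (add (neg v1) v2))))) (neg (add v1 (add (neg v1) v2)))) = (neg v0) := fun v0 v1 v2 => (Eq.trans (Eq.symm (congrArg (fun w => (add (neg (add (neg (neg v0)) (neg (add v1 (add (neg v1) v2))))) (neg w))) (e31 v1 v2 v0 v1 v2))) (e6 (neg v0) (add v1 (add (neg v1) v2))))
  have star : ∀ p q u : A, add (neg (neg (add u (neg u)))) (neg (add u (add (neg u) (neg (add p (add (add (neg p) q) (add u (neg u)))))))) = add p (add (neg p) q) := by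
    intro p q u
    have h := M2 p (add (neg p) q) u (neg u)
    rw [M1 p q (neg (add u (neg u)))] at h
    exact h
  have key : ∀ u y z : A, neg (add u (neg u)) = neg (add y (add (neg y) z)) := by
    intro u y z
    have h := e32 (add u (neg u)) y z
    rw [show add y (add (neg y) z) = add u (add (neg u) (neg (add y (add (add (neg y) z) (add u (neg u))))))
        from e42 u (neg (add y (add (add (neg y) z) (add u (neg u))))) y z] at h
    rw [star y z u] at h
    rw [M1 y z (neg (add u (add (neg u) (neg (add y (add (add (neg y) z) (add u (neg u))))))))] at h
    rw [← h]
    exact congrArg neg (e42 y z u (neg (add y (add (add (neg y) z) (add u (neg u))))))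
  exact ⟨fun u v => (key u u u).trans (key v u u).symm, fun x z u => key u x z⟩
end

section
/- Let (A, ⊕, ¬) be an algebra satisfying (M1) and (M2). Then double negation holds: ¬¬x = x for all x in A. -/
theorem stmt6 (A : Type*) (add : A → A → A) (neg : A → A)
  (M1 : ∀ x y z : A, add (neg (add x (add (neg x) y))) z = z)
  (M2 : ∀ x y z u : A, add (neg (add (neg (add x y)) (neg (add z u)))) (neg (add z (add u (neg (add x (add y (add z u))))))) = add x y) :
  ∀ x : A, neg (neg x) = x := by
  have eM1 : ∀ w0 v0 v1 v2 : A, (add (neg (add v0 (add (neg v0) v1))) v2) = v2 := fun _ a b c => M1 a b c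
  have eED : ∀ w0 v1 v3 : A, (add (neg (add (neg v1) (neg v3))) (neg (add v3 (neg (add v1 v3))))) = v1 := by
    intro w y u
    have h := M2 (neg (add w (add (neg w) w))) y (neg (add w (add (neg w) w))) u
    simp only [M1] at h
    exact h
  have e6 : ∀ w0 v1 v2 v100 v101 : A, (add (neg (add (neg (neg (add v100 (add (neg v100) v101)))) v1)) v2) = v2 :=
    fun w0 v1 v2 v100 v101 =>
    ((congrArg (fun hole => (add (neg hole) v2)) (eM1 w0 v100 v101 (add (neg (neg (add v100 (add (neg v100) v101)))) v1))).symm.trans (eM1 w0 (neg (add v100 (add (neg v100) v101))) v1 v2))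
  have e10 : ∀ w0 v100 v101 v102 : A, (neg (add v102 (neg v102))) = (neg (add v100 (add (neg v100) v101))) :=
    fun w0 v100 v101 v102 =>
    ((congrArg (fun hole => hole) (e6 w0 (neg v102) (neg (add v102 (neg v102))) v100 v101)).symm.trans ((congrArg (fun hole => (add (neg (add (neg (neg (add v100 (add (neg v100) v101)))) (neg v102))) (neg (add v102 (neg hole))))) (eM1 w0 v100 v101 v102)).symm.trans (eED w0 (neg (add v100 (add (neg v100) v101))) v102)))
  have e21 : ∀ w0 v2 v202 : A, (add (neg (add v202 (neg v202))) v2) = v2 :=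
    fun w0 v2 v202 =>
    ((congrArg (fun hole => (add hole v2)) ((e10 w0 w0 w0 v202)).symm).symm.trans (eM1 w0 w0 w0 v2))
  have e22 : ∀ w0 v1 : A, (neg (add (neg v1) (neg (add v1 (neg v1))))) = v1 :=
    fun w0 v1 =>
    ((congrArg (fun hole => hole) (eM1 w0 w0 w0 (neg (add (neg v1) (neg (add v1 (neg v1))))))).symm.trans ((congrArg (fun hole => (add hole (neg (add (neg v1) (neg (add v1 (neg v1))))))) (e10 w0 w0 w0 (neg v1))).symm.trans (eED w0 v1 (neg v1))))
  have e36 : ∀ w0 v102 v202 : A, (neg (add v202 (neg v202))) = (neg (add v102 (neg v102))) :=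
    fun w0 v102 v202 =>
    ((congrArg (fun hole => hole) ((e10 w0 w0 w0 v202)).symm).symm.trans ((e10 w0 w0 w0 v102)).symm)
  have e60 : ∀ w0 v202 v302 : A, (neg (add (neg v302) (neg (add v202 (neg v202))))) = v302 :=
    fun w0 v202 v302 =>
    ((congrArg (fun hole => hole) (e21 w0 (neg (add (neg v302) (neg (add v202 (neg v202))))) (neg v302))).symm.trans ((congrArg (fun hole => (add (neg (add (neg v302) (neg (neg v302)))) (neg (add (neg v302) hole)))) (e36 w0 v202 v302)).symm.trans (eED w0 v302 (neg v302))))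
  have e64 : ∀ w0 v202 v302 : A, (add v202 (neg v202)) = (add v302 (neg v302)) :=
    fun w0 v202 v302 =>
    ((congrArg (fun hole => hole) (e60 w0 (add v302 (neg v302)) (add v202 (neg v202)))).symm.trans ((congrArg (fun hole => (neg (add hole (neg (add (add v302 (neg v302)) (neg (add v302 (neg v302)))))))) (e36 w0 v202 v302)).symm.trans (e22 w0 (add v302 (neg v302)))))
  have e73 : ∀ w0 v302 : A, (neg (neg (add v302 (neg v302)))) = (add v302 (neg v302)) :=
    fun w0 v302 =>
    ((congrArg (fun hole => hole) (e21 w0 (neg (neg (add v302 (neg v302)))) v302)).symm.trans (e64 w0 (neg (add v302 (neg v302))) v302))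
  have e96 : ∀ w0 v100 v101 v202 : A, (add v202 (neg v202)) = (add v100 (add (neg v100) v101)) :=
    fun w0 v100 v101 v202 =>
    ((congrArg (fun hole => hole) (e73 w0 v202)).symm.trans ((congrArg (fun hole => (neg hole)) (eM1 w0 v100 v101 (neg (add v202 (neg v202))))).symm.trans (e60 w0 v202 (add v100 (add (neg v100) v101)))))
  have e226 : ∀ w0 v101 v202 : A, (add (add v202 (neg v202)) v101) = (add v202 (neg v202)) :=
    fun w0 v101 v202 =>
    ((congrArg (fun hole => (add (add v202 (neg v202)) hole)) (eM1 w0 w0 w0 v101)).symm.trans ((congrArg (fun hole => (add (add v202 (neg v202)) (add hole v101))) (e10 w0 w0 w0 v202)).symm.trans ((e96 w0 (add v202 (neg v202)) v101 v202)).symm))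
  have e239 : ∀ w0 v1 v302 : A, (add v1 (neg (add v302 (neg v302)))) = v1 :=
    fun w0 v1 v302 =>
    ((congrArg (fun hole => (add hole (neg (add v302 (neg v302))))) (e60 w0 v302 v1)).symm.trans ((congrArg (fun hole => (add (neg (add (neg v1) (neg (add v302 (neg v302))))) (neg hole))) (e226 w0 (neg (add v1 (add v302 (neg v302)))) v302)).symm.trans (eED w0 v1 (add v302 (neg v302)))))
  have e246 : ∀ w0 v1 : A, (neg (neg v1)) = v1 :=
    fun w0 v1 =>
    (((congrArg (fun hole => (add (neg (neg v1)) (neg hole))) (e226 w0 (neg (add v1 (add w0 (neg w0)))) w0)).trans (congrArg (fun hole => hole) (e239 w0 (neg (neg v1)) w0))).symm.trans ((congrArg (fun hole => (add (neg hole) (neg (add (add w0 (neg w0)) (neg (add v1 (add w0 (neg w0)))))))) (e239 w0 (neg v1) w0)).symm.trans (eED w0 v1 (add w0 (neg w0)))))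
  intro x
  exact e246 x x
end

section
/- Let (A, →) be an algebra with a binary operation → satisfying (C1) and (C2). Then the expression x → x is constant: for all x, y in A, x → x = y → y. -/
theorem stmt11 (A : Type*) (arr : A → A → A)
  (C1 : ∀ x y : A, arr (arr x x) y = y)
  (C2 : ∀ x y z : A, arr (arr x y) (arr z y) = arr (arr y x) (arr z x)) :
  ∀ x y : A, arr x x = arr y y := by
  intro x y
  have h := C2 (arr x x) (arr y y) (arr y y)
  simpa [C1] using h.symm
end

section
/- Let (A, →) be an algebra with a binary operation → satisfying (C1) and (C2). Then for all x, y, z, w in A: (x → (y → z)) → (y → (x → z)) = w → w. -/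
theorem stmt13 (A : Type*) (arr : A → A → A)
  (C1 : ∀ x y : A, arr (arr x x) y = y)
  (C2 : ∀ x y z : A, arr (arr x y) (arr z y) = arr (arr y x) (arr z x)) :
  ∀ x y z w : A, arr (arr x (arr y z)) (arr y (arr x z)) = arr w w := by
  intro x y z w
  -- L1 : (ab)b = (ba)a
  have L1 : ∀ a b : A, arr (arr a b) b = arr (arr b a) a := by
    intro a b
    have h := C2 a b (arr a a)
    rwa [C1 a b, C1 a a] at h
  -- star : aa = (a·qq)(qq·qq)
  have star : ∀ a q : A, arr a a = arr (arr a (arr q q)) (arr (arr q q) (arr q q)) := by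
    intro a q
    have h := C2 a (arr q q) (arr q q)
    rw [C1 q a] at h
    exact h.symm
  set P : A := arr (arr w w) (arr w w) with hP
  have Pid : ∀ y : A, arr P y = y := C1 (arr w w)
  -- all iterated squares equal P
  have sqc : ∀ a : A, arr (arr a a) (arr a a) = P := by
    intro a
    have h := star (arr a a) w
    rw [C1 a (arr w w)] at h
    rw [h]
    exact C1 w P
  have Pidem : arr P P = P := sqc (arr w w)
  -- A : aa = (aP)P
  have hA : ∀ a : A, arr a a = arr (arr a P) P := by
    intro a
    have h := star a (arr w w)
    rw [← hP, Pidem] at h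
    exact h
  -- C' : (aP)(aP) = P
  have hC : ∀ a : A, arr (arr a P) (arr a P) = P := by
    intro a
    have h := hA (arr a P)
    rw [← hA a, C1 a P] at h
    exact h
  -- e8 : a(ca) = (aP)(cP)
  have e8 : ∀ a c : A, arr a (arr c a) = arr (arr a P) (arr c P) := by
    intro a c
    have h := C2 a P c
    rw [Pid a] at h
    exact h.symm
  -- L4 : a(aa) = P
  have L4 : ∀ a : A, arr a (arr a a) = P := by
    intro a
    rw [e8 a a, hC a]
  -- Sq : aa = P
  have Sq : ∀ a : A, arr a a = P := by
    intro a
    have h2 := L4 (arr a P)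
    rw [hC a] at h2
    rw [hA a, h2]
  -- xP : aP = P
  have xP : ∀ a : A, arr a P = P := by
    intro a
    have h := L4 a
    rwa [Sq a] at h
  -- L5 : a(ca) = P
  have L5 : ∀ a c : A, arr a (arr c a) = P := by
    intro a c
    rw [e8 a c, xP a, Pid, xP c]
  -- Step 1 : y(xz) = ((xz)z)(yz)
  have step1 : arr y (arr x z) = arr (arr (arr x z) z) (arr y z) := by
    have h := C2 (arr x z) z y
    rw [L5 z x, Pid] at h
    exact h.symm
  -- Step 3 : ((xz)z)x = zx
  have step3 : arr (arr (arr x z) z) x = arr z x := by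
    rw [L1 x z, L1 (arr z x) x, L5 x z, Pid]
  calc arr (arr x (arr y z)) (arr y (arr x z))
      = arr (arr x (arr y z)) (arr (arr (arr x z) z) (arr y z)) := by rw [← step1]
    _ = arr (arr (arr y z) x) (arr (arr (arr x z) z) x) := C2 x (arr y z) (arr (arr x z) z)
    _ = arr (arr (arr y z) x) (arr z x) := by rw [step3]
    _ = arr (arr x (arr y z)) (arr z (arr y z)) := C2 (arr y z) x z
    _ = P := by rw [L5 z y, xP]
    _ = arr w w := (Sq w).symm
end

section
/- Every ŁBCK-algebra satisfies the identity: ((x → y) → z) → (y → x) = z → (y → x), for all x, y, z. -/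
theorem stmt15 (A : Type*) (arr : A → A → A) (one : A)
  (B1 : ∀ x y : A, arr (arr x y) y = arr (arr y x) x)
  (B2 : ∀ x y z : A, arr x (arr y z) = arr y (arr x z))
  (B3 : ∀ x : A, arr x x = one)
  (B4 : ∀ x : A, arr one x = x)
  (B5 : ∀ x y : A, arr (arr x y) (arr y x) = arr y x) :
  ∀ x y z : A, arr (arr (arr x y) z) (arr y x) = arr z (arr y x) := by
  -- x → (x → 1) = x → 1
  have h1 : ∀ x : A, arr x (arr x one) = arr x one := by
    intro x
    have h := B5 one x
    rwa [B4] at h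
  -- L6 : x → 1 = 1
  have L6 : ∀ x : A, arr x one = one := by
    intro x
    calc arr x one = arr x (arr (arr x one) (arr x one)) := by rw [B3]
      _ = arr (arr x one) (arr x (arr x one)) := by rw [B2]
      _ = arr (arr x one) (arr x one) := by rw [h1]
      _ = one := by rw [B3]
  -- L7 : x → (y → x) = 1
  have L7 : ∀ x y : A, arr x (arr y x) = one := by
    intro x y
    rw [B2, B3, L6]
  -- C : (u → v) → ((a → u) → (a → v)) = 1
  have C : ∀ a u v : A, arr (arr u v) (arr (arr a u) (arr a v)) = one := by
    intro a u v
    calc arr (arr u v) (arr (arr a u) (arr a v))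
        = arr (arr u v) (arr a (arr (arr a u) v)) := by rw [B2 (arr a u) a v]
      _ = arr a (arr (arr u v) (arr (arr a u) v)) := by rw [B2]
      _ = arr a (arr (arr a u) (arr (arr u v) v)) := by rw [B2 (arr u v) (arr a u) v]
      _ = arr a (arr (arr a u) (arr (arr v u) u)) := by rw [B1 u v]
      _ = arr (arr a u) (arr a (arr (arr v u) u)) := by rw [B2]
      _ = arr (arr a u) (arr (arr v u) (arr a u)) := by rw [B2 a (arr v u) u]
      _ = one := L7 (arr a u) (arr v u)
  intro x y z
  -- direction 1 : ((x→y)→z)→(y→x) ≤ z→(y→x)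
  have hd1 : arr (arr (arr (arr x y) z) (arr y x)) (arr z (arr y x)) = one := by
    have h := C z (arr (arr x y) z) (arr y x)
    rw [B2, L7, B4] at h
    exact h
  -- direction 2 : z→(y→x) ≤ ((x→y)→z)→(y→x)
  have hd2 : arr (arr z (arr y x)) (arr (arr (arr x y) z) (arr y x)) = one := by
    have h := C (arr x y) z (arr y x)
    rwa [B5 x y] at h
  calc arr (arr (arr x y) z) (arr y x)
      = arr one (arr (arr (arr x y) z) (arr y x)) := by rw [B4]
    _ = arr (arr (arr z (arr y x)) (arr (arr (arr x y) z) (arr y x)))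
          (arr (arr (arr x y) z) (arr y x)) := by rw [hd2]
    _ = arr (arr (arr (arr (arr x y) z) (arr y x)) (arr z (arr y x)))
          (arr z (arr y x)) := by rw [B1]
    _ = arr one (arr z (arr y x)) := by rw [hd1]
    _ = arr z (arr y x) := by rw [B4]
end

section
/- Let (A, →) be an algebra with a binary operation → satisfying (L1) and (L2). Then the commutativity identity (B1) holds: (x → y) → y = (y → x) → x for all x, y in A. -/
theorem stmt17 (A : Type*) (arr : A → A → A)
  (L1 : ∀ x y : A, arr (arr x x) y = y)
  (L2 : ∀ x y z : A, arr (arr (arr x y) (arr z x)) (arr y x) = arr (arr x z) (arr y z)) :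
  ∀ x y : A, arr (arr x y) y = arr (arr y x) x := by
  -- (A) : (z→x)→(x→x) = (x→z)→(x→z)
  have hA : ∀ z x : A, arr (arr z x) (arr x x) = arr (arr x z) (arr x z) := by
    intro z x
    have := L2 x x z
    simpa [L1] using this
  -- (B) : instantiate L2 at x := a→a
  have hB : ∀ a y z : A,
      arr (arr y (arr z (arr a a))) (arr y (arr a a)) = arr z (arr y z) := by
    intro a y z
    have := L2 (arr a a) y z
    simpa [L1] using this
  -- (D) : (y→(a→a))→(y→(a→a)) = y→(b→b)
  have hD : ∀ a b y : A,
      arr (arr y (arr a a)) (arr y (arr a a)) = arr y (arr b b) := by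
    intro a b y
    have := hB a y (arr b b)
    simpa [L1] using this
  -- all idempotents coincide
  have hconst : ∀ a b : A, arr a a = arr b b := by
    intro a b
    have h1 := hD a b (arr a a)
    rw [L1, L1] at h1
    -- h1 : arr (arr a a) (arr a a) = arr b b
    rw [L1] at h1
    exact h1.symm ▸ rfl
  -- everything maps to the constant idempotent
  have htop : ∀ x b : A, arr x (arr b b) = arr b b := by
    intro x b
    have h := hA (arr x x) x
    rw [L1] at h
    -- h : arr x (arr x x) = arr (arr x (arr x x)) (arr x (arr x x))
    rw [hconst (arr x (arr x x)) b] at h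
    rw [hconst x b] at h
    exact h
  intro x y
  have h := L2 y (arr y y) x
  rw [htop y y, L1, L1, L1] at h
  exact h
end

section
/- Let (A, →) be an algebra with a binary operation → satisfying (L1) and (L2). Then the expression x → x is constant: for all x, y in A, x → x = y → y. -/
theorem stmt18 (A : Type*) (arr : A → A → A)
  (L1 : ∀ x y : A, arr (arr x x) y = y)
  (L2 : ∀ x y z : A, arr (arr (arr x y) (arr z x)) (arr y x) = arr (arr x z) (arr y z)) :
  ∀ x y : A, arr x x = arr y y := by
  have star : ∀ x z : A, arr (arr z x) (arr x x) = arr (arr x z) (arr x z) := by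
    intro x z
    have h := L2 x x z
    rwa [L1] at h
  intro x y
  have h := star (arr y y) (arr x x)
  rw [L1, L1, L1, L1, L1] at h
  exact h.symm
end

section
/- Let (A, →) be an algebra with a binary operation → satisfying (L1) and (L2). Then the identity (B5) holds: (x → y) → (y → x) = y → x for all x, y in A. -/
theorem stmt19 (A : Type*) (arr : A → A → A)
  (L1 : ∀ x y : A, arr (arr x x) y = y)
  (L2 : ∀ x y z : A, arr (arr (arr x y) (arr z x)) (arr y x) = arr (arr x z) (arr y z)) :
  ∀ x y : A, arr (arr x y) (arr y x) = arr y x := by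
  -- (VI): ((a→b)→a)→(b→a) = (a→e_c)→(b→e_c)
  have hVI : ∀ a b c : A, arr (arr (arr a b) a) (arr b a)
      = arr (arr a (arr c c)) (arr b (arr c c)) := by
    intro a b c
    have h := L2 a b (arr c c)
    rwa [L1 c a] at h
  -- f(a) := a→(a→a) is idempotent
  have hf : ∀ a : A, arr a (arr a a)
      = arr (arr a (arr a a)) (arr a (arr a a)) := by
    intro a
    have h := hVI a a a
    rwa [L1 a a] at h
  have hfL1 : ∀ a z : A, arr (arr a (arr a a)) z = z := by
    intro a z
    rw [hf a, L1]
  -- (X): (b→a)→a = (a→b)→b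
  have hX : ∀ a b : A, arr (arr b a) a = arr (arr a b) b := by
    intro a b
    have h := L2 a (arr a a) b
    rwa [L1 a a, L1 a b, hfL1 a (arr b a)] at h
  -- (I): (b→a)→e_a = e_{a→b}
  have hI : ∀ a b : A, arr (arr b a) (arr a a) = arr (arr a b) (arr a b) := by
    intro a b
    have h := L2 a a b
    rwa [L1 a (arr b a)] at h
  -- (XI): ((a→b)→(b→a))→(b→a) = e_{b→a}
  have hXI : ∀ a b : A, arr (arr (arr a b) (arr b a)) (arr b a)
      = arr (arr b a) (arr b a) := by
    intro a b
    have h := L2 a b b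
    rwa [hI b a] at h
  -- (XXIII): e_{a→b} = e_{b→a}
  have hXXIII : ∀ a b : A, arr (arr a b) (arr a b) = arr (arr b a) (arr b a) := by
    intro a b
    have h1 := hX (arr a b) (arr b a)
    rw [hXI b a, hXI a b] at h1
    exact h1
  -- (XXIV): a→e_a = e_a
  have hXXIV : ∀ a : A, arr a (arr a a) = arr a a := by
    intro a
    have h := hVI a a a
    rw [L1 a a] at h
    -- h : a→e_a = e_{a→e_a}
    rw [hXXIII a (arr a a)] at h
    -- now RHS = ((a→a)→a)→((a→a)→a)
    rwa [L1 a a] at h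
  -- (II): (q→(p→e_c))→(q→e_c) = p→(q→p)
  have hII : ∀ c p q : A, arr (arr q (arr p (arr c c))) (arr q (arr c c))
      = arr p (arr q p) := by
    intro c p q
    have h := L2 (arr c c) q p
    rwa [L1 c q, L1 c p] at h
  -- (XXXI): p→(q→p) = e_{q→e_p} (idempotent!)
  have hXXXI : ∀ p q : A, arr p (arr q p)
      = arr (arr q (arr p p)) (arr q (arr p p)) := by
    intro p q
    have h := hII p p q
    rw [hXXIV p] at h
    exact h.symm
  -- Final argument
  intro x y
  set u := arr y x with hu
  set t := arr (arr x y) u with ht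
  have h1 : arr (arr u t) t = t := by
    rw [ht]
    rw [hXXXI u (arr x y)]
    rw [L1]
  have h2 : arr (arr u t) t = arr (arr t u) u := hX t u
  have h3 : arr t u = arr u u := hXI x y
  rw [h2, h3, hu, L1] at h1
  exact h1.symm
end
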